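/- Let k < 0, n > 0, 0 < μ < 1, a₁ = 2k/n² + μ - 1, b₁ = (-μ/(2k))^(1/3), and b₁² > a₁². Then the point P = (2k/n², 0, √(b₁² - a₁²)) satisfies all three equilibrium equations: n²x - 2k(x+μ) - (μ/r₂³)(x+μ-1) = 0, (n² - 2k - μ/r₂³)y = 0, and (-2k - μ/r₂³)z = 0, where r₂² = (x+μ-1)² + y² + z². -/

import Mathlib

theorem stmt_4 (k n μ a₁ b₁ : ℝ) (hk : k < 0) (hn : 0 < n)
    (hμ0 : 0 < μ) (hμ1 : μ < 1)
    (ha : a₁ = 2 * k / n ^ 2 + μ - 1) (hb : b₁ = (-μ / (2 * k)) ^ ((1 : ℝ) / 3))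
    (hba : b₁ ^ 2 > a₁ ^ 2) :
    let x : ℝ := 2 * k / n ^ 2
    let y : ℝ := 0
    let z : ℝ := Real.sqrt (b₁ ^ 2 - a₁ ^ 2)
    let r₂ : ℝ := Real.sqrt ((x + μ - 1) ^ 2 + y ^ 2 + z ^ 2)
    n ^ 2 * x - 2 * k * (x + μ) - (μ / r₂ ^ 3) * (x + μ - 1) = 0 ∧
    (n ^ 2 - 2 * k - μ / r₂ ^ 3) * y = 0 ∧
    (-2 * k - μ / r₂ ^ 3) * z = 0 := by
  intro x y z r₂
  have hbase : (0:ℝ) < -μ / (2 * k) := div_pos_of_neg_of_neg (by linarith) (by linarith)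
  have hb1pos : 0 < b₁ := hb ▸ Real.rpow_pos_of_pos hbase _
  have hb3 : b₁ ^ 3 = -μ / (2 * k) := by
    rw [hb, ← Real.rpow_natCast (_ ^ ((1:ℝ)/3)) 3, ← Real.rpow_mul hbase.le]
    norm_num
  have hr2 : r₂ = b₁ := by
    have : (x + μ - 1) ^ 2 + y ^ 2 + z ^ 2 = b₁ ^ 2 := by
      show (x + μ - 1) ^ 2 + 0 ^ 2 + Real.sqrt (b₁ ^ 2 - a₁ ^ 2) ^ 2 = b₁ ^ 2
      rw [Real.sq_sqrt (by linarith)]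
      have : x + μ - 1 = a₁ := by rw [ha]
      rw [this]; ring
    rw [show r₂ = Real.sqrt ((x + μ - 1) ^ 2 + y ^ 2 + z ^ 2) from rfl, this,
      Real.sqrt_sq hb1pos.le]
  have hne : b₁ ^ 3 ≠ 0 := by positivity
  have hdiv : μ / r₂ ^ 3 = -2 * k := by
    rw [hr2, hb3]
    rw [div_div_eq_mul_div, mul_comm, mul_div_assoc, div_neg, div_self hμ0.ne', mul_neg_one]
    ring
  have hn2 : (n:ℝ) ^ 2 ≠ 0 := by positivity
  refine ⟨?_, by simp [y], by rw [hdiv]; ring⟩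
  rw [hdiv]
  show n ^ 2 * (2 * k / n ^ 2) - 2 * k * (2 * k / n ^ 2 + μ) -
    -2 * k * (2 * k / n ^ 2 + μ - 1) = 0
  field_simp
  ring
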